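/- arXiv:2108.00919 — 4 statements merged into one kernel-verified Lean document; each statement's English description precedes it below -/
import Mathlib

section
/- There exists a function f : ℕ → ℕ such that the following holds. Let G be a finite group admitting an automorphism α whose order is coprime to |G|, and suppose that |I_G(α)| ≤ m. Then the order of [G,α] is at most f(m). -/
/-!
Let `C` be the fixed-point subgroup of `α` and `H = [G,α]`. The map `g ↦ g⁻¹α(g)` identifies the
cosets of `C` with `I_G(α)`, so `|G : C| ≤ m` and the normal core `N` of `C` has index at most `m!`.
Since `α` fixes both `n ∈ N` and `gng⁻¹`, every `n ∈ N` commutes with `g⁻¹α(g)`; thus `N`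
centralizes `H`, `|H : Z(H)| ≤ m!`, and Schur's theorem bounds `|H'|`. Finally `α` induces an
automorphism `β` of `G/H'` with `[G/H', β] = H/H'` abelian. There the norm `x ↦ ∏ᵢ βⁱ(x)`
telescopes to `1` on the generators, hence is trivial, so by coprimality `β` fixes no nontrivial
element of `H/H'`; then `x ↦ x⁻¹β(x)` embeds `H/H'` into the image of `I_G(α)`, and `|H/H'| ≤ m`.
-/

open Subgroup
open scoped commutatorElement Nat

namespace Subgroup

variable {G : Type*} [Group G]

theorem relIndex_le_index (H K : Subgroup G) [H.FiniteIndex] : H.relIndex K ≤ H.index :=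
  (relIndex_le_of_le_right le_top (by simpa using FiniteIndex.index_ne_zero)).trans_eq
    (relIndex_top_right H)

theorem index_normalCore_le_factorial (H : Subgroup G) [H.FiniteIndex] :
    H.normalCore.index ≤ H.index ! := by
  rw [normalCore_eq_ker, index_ker, index_eq_card, ← Nat.card_perm]
  exact card_le_card_group _

theorem index_center_le_of_le_centralizer {H K : Subgroup G} [K.FiniteIndex]
    (hK : K ≤ centralizer H) : (center H).index ≤ K.index :=
  calc (center H).index ≤ (K.subgroupOf H).index :=
        index_antitone fun _ hk => mem_center_iff.mpr fun h => Subtype.ext (hK hk h h.2)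
    _ ≤ K.index := relIndex_le_index K H

theorem card_le_card_map_mul_card_ker [Finite G] {Q : Type*} [Group Q] (f : G →* Q)
    (H : Subgroup G) : Nat.card H ≤ Nat.card f.ker * Nat.card (H.map f) := by
  rw [← card_mul_index (f.domRestrict H).ker, index_ker, MonoidHom.domRestrict_range,
    MonoidHom.ker_domRestrict, ← card_map_of_injective H.subtype_injective,
    subgroupOf_map_subtype]
  gcongr
  exact card_le_of_le inf_le_left

theorem commutatorElement_mul_mul_of_mem_center {x y z w : G} (hz : z ∈ center G)
    (hw : w ∈ center G) :
    ⁅x * z, y * w⁆ = ⁅x, y⁆ := by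
  rw [mem_center_iff] at hz hw
  calc ⁅x * z, y * w⁆ = x * (z * (y * w)) * z⁻¹ * x⁻¹ * w⁻¹ * y⁻¹ := by
        rw [commutatorElement_def]; group
    _ = x * y * (w * x⁻¹) * w⁻¹ * y⁻¹ := by rw [← hz (y * w)]; group
    _ = ⁅x, y⁆ := by rw [← hw x⁻¹, commutatorElement_def]; group

theorem isMulCommutative_map_mk'_commutator (H : Subgroup G) [⁅H, H⁆.Normal] :
    IsMulCommutative (H.map (QuotientGroup.mk' ⁅H, H⁆)) := by
  refine ⟨⟨?_⟩⟩
  rintro ⟨_, x, hx, rfl⟩ ⟨_, y, hy, rfl⟩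
  refine Subtype.ext ?_
  simp only [MulMemClass.mk_mul_mk, QuotientGroup.mk'_apply]
  rw [← QuotientGroup.mk_mul, ← QuotientGroup.mk_mul, QuotientGroup.eq]
  have : (x * y)⁻¹ * (y * x) = ⁅y⁻¹, x⁻¹⁆ := by rw [commutatorElement_def]; group
  rw [this]
  exact commutator_mem_commutator (inv_mem hy) (inv_mem hx)

end Subgroup

section Schur

variable (G : Type*) [Group G]

theorem commutatorSet_eq_range_out :
    commutatorSet G =
      Set.range fun p : (G ⧸ center G) × (G ⧸ center G) => ⁅p.1.out, p.2.out⁆ := by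
  ext c
  constructor
  · rintro ⟨x, y, rfl⟩
    obtain ⟨z, hz⟩ := QuotientGroup.mk_out_eq_mul (center G) x
    obtain ⟨w, hw⟩ := QuotientGroup.mk_out_eq_mul (center G) y
    exact ⟨(x, y), by simp only [hz, hw, commutatorElement_mul_mul_of_mem_center z.2 w.2]⟩
  · rintro ⟨p, rfl⟩
    exact commutator_mem_commutatorSet _ _

theorem card_commutator_le_index_center_pow [(center G).FiniteIndex] :
    Nat.card (commutator G) ≤ (center G).index ^ ((center G).index ^ 3 + 1) := by
  set c := (center G).index
  have hc : 0 < c := Nat.pos_of_ne_zero FiniteIndex.index_ne_zero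
  have hfin : Finite (commutatorSet G) := by rw [commutatorSet_eq_range_out]; infer_instance
  have hcard : Nat.card (commutatorSet G) ≤ c ^ 2 := by
    rw [commutatorSet_eq_range_out, sq]
    exact (Finite.card_range_le _).trans_eq (Nat.card_prod _ _)
  calc Nat.card (commutator G) ≤ c ^ (c * Nat.card (commutatorSet G) + 1) :=
        Nat.le_of_dvd (pow_pos hc _) (card_commutator_dvd_index_center_pow G)
    _ ≤ c ^ (c ^ 3 + 1) := by
        refine Nat.pow_le_pow_right hc (Nat.add_le_add_right ?_ 1)
        calc c * Nat.card (commutatorSet G) ≤ c * c ^ 2 := by gcongr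
          _ = c ^ 3 := by ring

end Schur

namespace MulAut

variable {G : Type*} [Group G]

def commutatorSet (α : MulAut G) : Set G := {x | ∃ g : G, x = g⁻¹ * α g}

def commutatorSubgroup (α : MulAut G) : Subgroup G := closure α.commutatorSet

def fixedSubgroup (α : MulAut G) : Subgroup G := (α : G →* G).eqLocus (MonoidHom.id G)

theorem mem_fixedSubgroup {α : MulAut G} {g : G} : g ∈ α.fixedSubgroup ↔ α g = g := Iff.rfl

theorem mul_inv_mem_fixedSubgroup_iff {α : MulAut G} {a b : G} :
    b * a⁻¹ ∈ α.fixedSubgroup ↔ a⁻¹ * α a = b⁻¹ * α b := by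
  rw [mem_fixedSubgroup, map_mul, map_inv, mul_inv_eq_iff_eq_mul, eq_inv_mul_iff_mul_eq,
    mul_assoc, eq_comm]

theorem index_fixedSubgroup (α : MulAut G) :
    α.fixedSubgroup.index = Nat.card α.commutatorSet := by
  have hrange : Set.range (fun g => g⁻¹ * α g) = α.commutatorSet := by
    ext x; exact exists_congr fun g => eq_comm
  calc α.fixedSubgroup.index = Nat.card (Quotient (QuotientGroup.rightRel α.fixedSubgroup)) :=
        Nat.card_congr (QuotientGroup.quotientRightRelEquivQuotientLeftRel _).symm
    _ = Nat.card (Set.range fun g => g⁻¹ * α g) :=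
        Nat.card_congr ((Quotient.congrRight fun _ _ =>
          QuotientGroup.rightRel_apply.trans mul_inv_mem_fixedSubgroup_iff).trans
          (Setoid.quotientKerEquivRange _))
    _ = Nat.card α.commutatorSet := by rw [hrange]

instance commutatorSubgroup_normal (α : MulAut G) : α.commutatorSubgroup.Normal := by
  refine normalizer_eq_top_iff.mp (eq_top_iff.mpr (le_normalizer_closure_iff.mpr ?_))
  rintro c - _ ⟨g, rfl⟩
  have : c * (g⁻¹ * α g) * c⁻¹ = (g * c⁻¹)⁻¹ * α (g * c⁻¹) * (c⁻¹⁻¹ * α c⁻¹)⁻¹ := by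
    simp only [map_mul, map_inv]; group
  rw [this]
  exact mul_mem (subset_closure ⟨_, rfl⟩) (inv_mem (subset_closure ⟨_, rfl⟩))

theorem normalCore_fixedSubgroup_le_centralizer (α : MulAut G) :
    α.fixedSubgroup.normalCore ≤ centralizer α.commutatorSubgroup := by
  rw [commutatorSubgroup, centralizer_closure]
  intro n hn
  rw [mem_centralizer_iff]
  rintro _ ⟨g, rfl⟩
  have hconj : α (g * n * g⁻¹) = g * n * g⁻¹ := hn g
  rw [map_mul, map_mul, map_inv, mem_fixedSubgroup.mp (normalCore_le _ hn)] at hconj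
  calc g⁻¹ * α g * n = g⁻¹ * (α g * n * (α g)⁻¹) * α g := by group
    _ = n * (g⁻¹ * α g) := by rw [hconj]; group

theorem index_center_commutatorSubgroup_le [Finite G] (α : MulAut G) :
    (center α.commutatorSubgroup).index ≤ (Nat.card α.commutatorSet) ! := by
  calc (center α.commutatorSubgroup).index ≤ α.fixedSubgroup.normalCore.index :=
        index_center_le_of_le_centralizer (normalCore_fixedSubgroup_le_centralizer α)
    _ ≤ α.fixedSubgroup.index ! := index_normalCore_le_factorial _
    _ = (Nat.card α.commutatorSet) ! := by rw [index_fixedSubgroup]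

section Equivariant

variable {Q : Type*} [Group Q] {α : MulAut G} {β : MulAut Q} {f : G →* Q}

theorem image_commutatorSet (hsurj : Function.Surjective f) (hf : ∀ g, f (α g) = β (f g)) :
    f '' α.commutatorSet = β.commutatorSet := by
  ext x
  constructor
  · rintro ⟨_, ⟨g, rfl⟩, rfl⟩
    exact ⟨f g, by rw [map_mul, map_inv, hf]⟩
  · rintro ⟨q, rfl⟩
    obtain ⟨g, rfl⟩ := hsurj q
    exact ⟨g⁻¹ * α g, ⟨g, rfl⟩, by rw [map_mul, map_inv, hf]⟩

theorem map_commutatorSubgroup (hsurj : Function.Surjective f) (hf : ∀ g, f (α g) = β (f g)) :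
    α.commutatorSubgroup.map f = β.commutatorSubgroup := by
  rw [commutatorSubgroup, MonoidHom.map_closure, image_commutatorSet hsurj hf, commutatorSubgroup]

theorem pow_eq_one_of_surjective (hsurj : Function.Surjective f) (hf : ∀ g, f (α g) = β (f g))
    {n : ℕ} (hα : α ^ n = 1) : β ^ n = 1 := by
  have hpow (k : ℕ) (g : G) : f ((α ^ k) g) = (β ^ k) (f g) := by
    induction k generalizing g with
    | zero => rfl
    | succ k ih => rw [pow_succ, pow_succ, mul_apply, mul_apply, ih, hf]
  ext q
  obtain ⟨g, rfl⟩ := hsurj q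
  rw [← hpow, hα, one_apply, one_apply]

end Equivariant

theorem map_commutatorSubgroup_self (α : MulAut G) :
    α.commutatorSubgroup.map (α : G →* G) = α.commutatorSubgroup :=
  map_commutatorSubgroup α.surjective fun _ => rfl

section Coprime

open scoped IsMulCommutative

variable {α : MulAut G}

def restrictCommutatorSubgroup (α : MulAut G) : MulAut α.commutatorSubgroup :=
  (α.subgroupMap _).trans (MulEquiv.subgroupCongr α.map_commutatorSubgroup_self)

theorem coe_restrictCommutatorSubgroup_pow_apply (k : ℕ) (x : α.commutatorSubgroup) :
    ((α.restrictCommutatorSubgroup ^ k) x : G) = (α ^ k) x := by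
  induction k with
  | zero => rfl
  | succ k ih => rw [pow_succ', mul_apply, pow_succ', mul_apply, ← ih]; rfl

theorem coe_prod_restrictCommutatorSubgroup_pow_apply [IsMulCommutative α.commutatorSubgroup]
    (k : ℕ) {g : G} (x : α.commutatorSubgroup) (hx : (x : G) = g⁻¹ * α g) :
    ((∏ i ∈ Finset.range k, (α.restrictCommutatorSubgroup ^ i) x : α.commutatorSubgroup) : G) =
      g⁻¹ * (α ^ k) g := by
  induction k with
  | zero => simp
  | succ k ih =>
    rw [Finset.prod_range_succ, Subgroup.coe_mul, ih, coe_restrictCommutatorSubgroup_pow_apply,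
      hx, map_mul, map_inv, ← mul_apply, ← pow_succ]
    group

theorem prod_restrictCommutatorSubgroup_pow_apply_eq_one [IsMulCommutative α.commutatorSubgroup]
    {n : ℕ} (hα : α ^ n = 1) (x : α.commutatorSubgroup) :
    ∏ i ∈ Finset.range n, (α.restrictCommutatorSubgroup ^ i) x = 1 := by
  let norm : α.commutatorSubgroup →* α.commutatorSubgroup :=
    ∏ i ∈ Finset.range n, ((α.restrictCommutatorSubgroup ^ i : MulAut _) : _ →* _)
  suffices norm = 1 by simpa [norm, MonoidHom.finsetProd_apply] using DFunLike.congr_fun this x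
  have hgen : closure (((↑) : α.commutatorSubgroup → G) ⁻¹' α.commutatorSet) = ⊤ :=
    closure_preimage_eq_top _
  refine MonoidHom.eq_of_eqOn_dense hgen fun y ⟨g, hg⟩ => Subtype.ext ?_
  have := coe_prod_restrictCommutatorSubgroup_pow_apply n y hg
  rw [hα, one_apply, inv_mul_cancel] at this
  simp only [norm, MonoidHom.finsetProd_apply, MonoidHom.one_apply, OneMemClass.coe_one]
  exact this

theorem commutatorSubgroup_inf_fixedSubgroup_eq_bot [Finite G]
    [IsMulCommutative α.commutatorSubgroup] {n : ℕ} (hα : α ^ n = 1)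
    (hn : n.Coprime (Nat.card G)) : α.commutatorSubgroup ⊓ α.fixedSubgroup = ⊥ := by
  refine eq_bot_iff.mpr fun x ⟨hxH, hxC⟩ => ?_
  have hfix : α.restrictCommutatorSubgroup ⟨x, hxH⟩ = ⟨x, hxH⟩ := Subtype.ext hxC
  have hfix_pow (i : ℕ) : (α.restrictCommutatorSubgroup ^ i) ⟨x, hxH⟩ = ⟨x, hxH⟩ := by
    induction i with
    | zero => rfl
    | succ i ih => rw [pow_succ, mul_apply, hfix, ih]
  have hpow : x ^ n = 1 := by
    have := prod_restrictCommutatorSubgroup_pow_apply_eq_one hα ⟨x, hxH⟩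
    simp only [hfix_pow, Finset.prod_const, Finset.card_range] at this
    exact congrArg Subtype.val this
  rw [mem_bot, ← orderOf_eq_one_iff]
  exact Nat.eq_one_of_dvd_coprimes hn (orderOf_dvd_of_pow_eq_one hpow) (orderOf_dvd_natCard x)

theorem card_commutatorSubgroup_le_of_isMulCommutative [Finite G]
    [IsMulCommutative α.commutatorSubgroup] {n : ℕ} (hα : α ^ n = 1)
    (hn : n.Coprime (Nat.card G)) :
    Nat.card α.commutatorSubgroup ≤ Nat.card α.commutatorSet :=
  calc Nat.card α.commutatorSubgroup = (⊥ : Subgroup G).relIndex α.commutatorSubgroup :=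
        (relIndex_bot_left _).symm
    _ = α.fixedSubgroup.relIndex α.commutatorSubgroup := by
        rw [← commutatorSubgroup_inf_fixedSubgroup_eq_bot hα hn, inf_comm, inf_relIndex_right]
    _ ≤ α.fixedSubgroup.index := relIndex_le_index _ _
    _ = Nat.card α.commutatorSet := index_fixedSubgroup α

end Coprime

section Bound

variable [Finite G] (α : MulAut G) {m : ℕ}

theorem card_commutator_commutatorSubgroup_le (hm : Nat.card α.commutatorSet ≤ m) :
    Nat.card (commutator α.commutatorSubgroup) ≤ m ! ^ (m ! ^ 3 + 1) := by
  have hc : (center α.commutatorSubgroup).index ≤ m ! :=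
    (index_center_commutatorSubgroup_le α).trans (Nat.factorial_le hm)
  calc Nat.card (commutator α.commutatorSubgroup)
      ≤ (center α.commutatorSubgroup).index ^ ((center α.commutatorSubgroup).index ^ 3 + 1) :=
        card_commutator_le_index_center_pow _
    _ ≤ m ! ^ (m ! ^ 3 + 1) := by gcongr; exact Nat.factorial_pos m

theorem card_map_mk'_commutatorSubgroup_le (hcop : (orderOf α).Coprime (Nat.card G)) :
    Nat.card (α.commutatorSubgroup.map (QuotientGroup.mk'
      ⁅α.commutatorSubgroup, α.commutatorSubgroup⁆)) ≤ Nat.card α.commutatorSet := by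
  set H := α.commutatorSubgroup
  set f := QuotientGroup.mk' ⁅H, H⁆
  let β : MulAut (G ⧸ ⁅H, H⁆) :=
    QuotientGroup.congr _ _ α (by rw [map_commutator, map_commutatorSubgroup_self])
  have hf (g : G) : f (α g) = β (f g) := (QuotientGroup.congr_mk' _ _ _ _ g).symm
  have hsurj : Function.Surjective f := QuotientGroup.mk'_surjective _
  have hH : H.map f = β.commutatorSubgroup := map_commutatorSubgroup hsurj hf
  have : IsMulCommutative β.commutatorSubgroup := hH ▸ isMulCommutative_map_mk'_commutator H
  rw [hH]
  calc Nat.card β.commutatorSubgroup ≤ Nat.card β.commutatorSet :=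
        card_commutatorSubgroup_le_of_isMulCommutative
          (pow_eq_one_of_surjective hsurj hf (pow_orderOf_eq_one α))
          (hcop.coprime_dvd_right (card_quotient_dvd_card _))
    _ = Nat.card (f '' α.commutatorSet) := by rw [image_commutatorSet hsurj hf]
    _ ≤ Nat.card α.commutatorSet := Nat.card_image_le (Set.toFinite _)

theorem card_commutatorSubgroup_le (hcop : (orderOf α).Coprime (Nat.card G))
    (hm : Nat.card α.commutatorSet ≤ m) :
    Nat.card α.commutatorSubgroup ≤ m ! ^ (m ! ^ 3 + 1) * m := by
  set H := α.commutatorSubgroup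
  calc Nat.card H
      ≤ Nat.card (QuotientGroup.mk' ⁅H, H⁆).ker * Nat.card (H.map (QuotientGroup.mk' ⁅H, H⁆)) :=
        card_le_card_map_mul_card_ker _ H
    _ = Nat.card (commutator H) * Nat.card (H.map (QuotientGroup.mk' ⁅H, H⁆)) := by
        rw [QuotientGroup.ker_mk', ← card_map_of_injective H.subtype_injective,
          map_subtype_commutator]
    _ ≤ m ! ^ (m ! ^ 3 + 1) * m :=
        Nat.mul_le_mul (card_commutator_commutatorSubgroup_le α hm)
          ((card_map_mk'_commutatorSubgroup_le α hcop).trans hm)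

end Bound

end MulAut

/-- If a finite group `G` admits a coprime automorphism `α` with `|I_G(α)| ≤ m`,
then the order of `[G,α]` is `m`-bounded. -/
theorem order_of_commutator_subgroup_bounded :
    ∃ f : ℕ → ℕ,
      ∀ (G : Type*) [Group G] [Finite G] (α : MulAut G) (m : ℕ),
        Nat.Coprime (orderOf α) (Nat.card G) →
        Nat.card {x : G | ∃ g : G, x = g⁻¹ * α g} ≤ m →
        Nat.card (Subgroup.closure {x : G | ∃ g : G, x = g⁻¹ * α g}) ≤ f m :=
  ⟨fun m => m ! ^ (m ! ^ 3 + 1) * m, fun _ _ _ α _ hcop hm => α.card_commutatorSubgroup_le hcop hm⟩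
end

section
/- Let G be a finite group admitting an automorphism α whose order is coprime to |G| and such that G = [G,α]. Suppose G = N·H, where N is an α-invariant normal subgroup of G and H is an α-invariant subgroup of G (i.e., every element of G is a product of an element of N and an element of H). If S is a subset of G generating [H,α] and T is a subset of G generating [N,α], then S ∪ T generates G. -/
/-- Lemma 2.6: Let `G` be a finite group with a coprime automorphism `α` and `G = [G,α]`.
Suppose `G = N·H` with `N` an `α`-invariant normal subgroup and `H` an `α`-invariant
subgroup. If `S` generates `[H,α]` and `T` generates `[N,α]`, then `S ∪ T` generates `G`. -/
theorem generation_from_normal_product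
    (G : Type*) [Group G] [Finite G] (α : MulAut G)
    (hcop : Nat.Coprime (orderOf α) (Nat.card G))
    (hGα : Subgroup.closure {x : G | ∃ g : G, x = g⁻¹ * α g} = ⊤)
    (N H : Subgroup G) (hN : N.Normal)
    (hNinv : Subgroup.map α.toMonoidHom N = N)
    (hHinv : Subgroup.map α.toMonoidHom H = H)
    (hprod : ∀ g : G, ∃ n ∈ N, ∃ h ∈ H, g = n * h)
    (S T : Set G)
    (hS : Subgroup.closure S = Subgroup.closure {x : G | ∃ g ∈ H, x = g⁻¹ * α g})
    (hT : Subgroup.closure T = Subgroup.closure {x : G | ∃ g ∈ N, x = g⁻¹ * α g}) :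
    Subgroup.closure (S ∪ T) = ⊤ := by
  haveI := hN
  set sN : Set G := {x : G | ∃ g ∈ N, x = g⁻¹ * α g} with hsN
  set sH : Set G := {x : G | ∃ g ∈ H, x = g⁻¹ * α g} with hsH
  set DN := Subgroup.closure sN with hDN
  set DH := Subgroup.closure sH with hDH
  set M := Subgroup.normalClosure sN with hM
  -- sN ⊆ N
  have hsNsubN : sN ⊆ (N : Set G) := by
    rintro x ⟨g, hg, rfl⟩
    have : α g ∈ N := by
      rw [← hNinv]; exact ⟨g, hg, rfl⟩
    exact mul_mem (inv_mem hg) this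
  have hMN : M ≤ N := Subgroup.normalClosure_le_normal hsNsubN
  -- N normalizes DN
  have hconjDN : ∀ n ∈ N, ∀ x ∈ DN, n * x * n⁻¹ ∈ DN := by
    intro n hn x hx
    refine Subgroup.closure_induction (fun y hy => ?_) (by simpa using DN.one_mem)
      (fun a b _ _ iha ihb => by rw [← conj_mul]; exact mul_mem iha ihb)
      (fun a _ iha => by rw [← conj_inv]; exact inv_mem iha) hx
    obtain ⟨g, hg, rfl⟩ := hy
    have key : n * (g⁻¹ * α g) * n⁻¹
        = ((g * n⁻¹)⁻¹ * α (g * n⁻¹)) * ((n⁻¹)⁻¹ * α n⁻¹)⁻¹ := by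
      simp only [map_mul, map_inv]
      group
    rw [key]
    exact mul_mem
      (Subgroup.subset_closure ⟨g * n⁻¹, mul_mem hg (inv_mem hn), rfl⟩)
      (inv_mem (Subgroup.subset_closure ⟨n⁻¹, inv_mem hn, rfl⟩))
  -- G = DH ⊔ M
  have htop : DH ⊔ M = ⊤ := by
    rw [eq_top_iff, ← hGα]
    refine (Subgroup.closure_le _).mpr ?_
    rintro x ⟨g, rfl⟩
    obtain ⟨n, hn, h, hh, rfl⟩ := hprod g
    have h1 : h⁻¹ * (n⁻¹ * α n) * (h⁻¹)⁻¹ ∈ M :=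
      Subgroup.normalClosure_normal.conj_mem _ (Subgroup.subset_normalClosure (s := sN) ⟨n, hn, rfl⟩) h⁻¹
    have h2 : h⁻¹ * α h ∈ DH := Subgroup.subset_closure ⟨h, hh, rfl⟩
    have key : (n * h)⁻¹ * α (n * h)
        = (h⁻¹ * (n⁻¹ * α n) * (h⁻¹)⁻¹) * (h⁻¹ * α h) := by
      simp only [map_mul]
      group
    rw [key]
    exact mul_mem (Subgroup.mem_sup_right h1) (Subgroup.mem_sup_left h2)
  -- M ≤ DH ⊔ DN
  have hMK : M ≤ DH ⊔ DN := by
    show Subgroup.closure (Group.conjugatesOfSet sN) ≤ DH ⊔ DN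
    refine (Subgroup.closure_le _).mpr ?_
    intro x hx
    obtain ⟨a, ha, hconj⟩ := Group.mem_conjugatesOfSet_iff.mp hx
    obtain ⟨c, hx'⟩ := isConj_iff.mp hconj
    replace hx' : x = c * a * c⁻¹ := hx'.symm
    have hcG : c ∈ DH ⊔ M := htop ▸ Subgroup.mem_top c
    rw [← SetLike.mem_coe, Subgroup.mul_normal] at hcG
    obtain ⟨k, hk, m, hm, rfl⟩ := hcG
    have hma : m * a * m⁻¹ ∈ DN := hconjDN m (hMN hm) a (Subgroup.subset_closure ha)
    have key : (k * m) * a * (k * m)⁻¹ = k * (m * a * m⁻¹) * k⁻¹ := by group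
    rw [hx', key]
    exact mul_mem (mul_mem (Subgroup.mem_sup_left hk) (Subgroup.mem_sup_right hma))
      (inv_mem (Subgroup.mem_sup_left hk))
  rw [Subgroup.closure_union, hS, hT, eq_top_iff, ← htop]
  exact sup_le le_sup_left hMK
end

section
/- Let k be a field, V a finite-dimensional vector space over k, and x an invertible linear map of V such that the cyclic group ⟨x⟩ acts irreducibly on V (i.e., no subspace of V other than 0 and V is invariant under x). Then for every invertible linear map y of V, the commutator [x,y] = x⁻¹y⁻¹xy is not a transvection: there do not exist a nonzero vector u ∈ V and a nonzero linear functional f : V → k with f(u) = 0 such that [x,y](v) = v + f(v)·u for all v ∈ V. -/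
open Polynomial Module

/-- Corollary 3.5: Let `x ∈ GL(V)` act irreducibly on the finite-dimensional vector space
`V` over a field `k`. Then for any `y ∈ GL(V)` the commutator `[x,y] = x⁻¹y⁻¹xy` is not a
transvection. -/
theorem commutator_not_transvection
    (k : Type*) [Field k] (V : Type*) [AddCommGroup V] [Module k V]
    [FiniteDimensional k V]
    (x : V ≃ₗ[k] V)
    (hirr : ∀ W : Submodule k V, (∀ v ∈ W, x v ∈ W) → W = ⊥ ∨ W = ⊤)
    (y : V ≃ₗ[k] V) :
    ¬ ∃ (u : V) (f : V →ₗ[k] k), u ≠ 0 ∧ f ≠ 0 ∧ f u = 0 ∧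
      ∀ v : V, (x⁻¹ * y⁻¹ * x * y) v = v + f v • u := by
  classical
  rintro ⟨u, f, hu, hf, hfu, hcomm⟩
  set E : Module.End k V := (x : V →ₗ[k] V) with hE
  set Y : Module.End k V := (y : V →ₗ[k] V) with hY
  set Yi : Module.End k V := ((y⁻¹ : V ≃ₗ[k] V) : V →ₗ[k] V) with hYi
  set T : Module.End k V := LinearMap.id + f.smulRight u with hT
  have hTapp : ∀ v, T v = v + f v • u := by intro v; simp [hT]
  have hYiY : Yi * Y = 1 := by
    ext v
    show (y⁻¹ : V ≃ₗ[k] V) (y v) = v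
    exact y.symm_apply_apply v
  have hYYi : Y * Yi = 1 := by
    ext v
    show y ((y⁻¹ : V ≃ₗ[k] V) v) = v
    exact y.apply_symm_apply v
  have hconj : Yi * E * Y = E * T := by
    ext v
    have h := hcomm v
    have h2 := congrArg x h
    rw [show (x⁻¹ * y⁻¹ * x * y) v = (x⁻¹ : V ≃ₗ[k] V) ((y⁻¹ : V ≃ₗ[k] V) (x (y v))) from rfl,
      show (x⁻¹ : V ≃ₗ[k] V) = x.symm from rfl, x.apply_symm_apply] at h2
    show (y⁻¹ : V ≃ₗ[k] V) (x (y v)) = x (T v)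
    rw [hTapp]
    exact h2
  -- characteristic polynomial facts
  set q : Polynomial k := LinearMap.charpoly E with hq
  set n : ℕ := Module.finrank k V with hn
  have hntriv : Nontrivial V := nontrivial_of_ne u 0 hu
  have hn1 : 0 < n := Module.finrank_pos
  have hqdeg : q.natDegree = n := E.charpoly_natDegree
  have hcn : q.coeff n = 1 := by
    rw [← hqdeg]; exact (E.charpoly_monic).coeff_natDegree
  -- conjugation of powers
  have hmulconj : ∀ a c : Module.End k V, (Yi * a * Y) * (Yi * c * Y) = Yi * (a * c) * Y := by
    intro a c
    calc (Yi * a * Y) * (Yi * c * Y) = Yi * a * (Y * Yi) * (c * Y) := by noncomm_ring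
      _ = Yi * (a * c) * Y := by rw [hYYi, mul_one]; noncomm_ring
  have hpow : ∀ m : ℕ, (E * T) ^ m = Yi * E ^ m * Y := by
    intro m
    induction m with
    | zero => simp [hYiY]
    | succ m ih => rw [pow_succ, ih, ← hconj, hmulconj, ← pow_succ]
  -- Cayley-Hamilton for E and for E*T
  have hB : ∑ i ∈ Finset.range (n+1), q.coeff i • ((E^i) u) = 0 := by
    have h1 : (aeval E) q = 0 := E.aeval_self_charpoly
    rw [aeval_eq_sum_range, hqdeg] at h1
    have := congrArg (fun g : Module.End k V => g u) h1
    simpa using this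
  have hETsum : ∑ i ∈ Finset.range (n+1), q.coeff i • (E*T)^i = 0 := by
    have h1 : (aeval E) q = 0 := E.aeval_self_charpoly
    rw [aeval_eq_sum_range, hqdeg] at h1
    calc ∑ i ∈ Finset.range (n+1), q.coeff i • (E*T)^i
        = Yi * (∑ i ∈ Finset.range (n+1), q.coeff i • E^i) * Y := by
          rw [Finset.mul_sum, Finset.sum_mul]
          refine Finset.sum_congr rfl fun i _ => ?_
          rw [hpow, mul_smul_comm, smul_mul_assoc]
      _ = 0 := by rw [h1, mul_zero, zero_mul]
  -- the sequence w m = (E*T)^m u and scalars b m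
  set w : ℕ → V := fun m => ((E*T)^m) u with hw
  set b : ℕ → k := fun m => f (w m) with hb
  have hb0 : b 0 = 0 := by simp [hb, hw, hfu]
  have hwsucc : ∀ m, w (m+1) = E (w m) + b m • E u := by
    intro m
    show ((E*T)^(m+1)) u = _
    rw [pow_succ', Module.End.mul_apply, Module.End.mul_apply]
    show E (T (w m)) = _
    rw [hTapp, map_add, map_smul]
  have hC : ∀ m, w m = (E^m) u + ∑ j ∈ Finset.range m, b j • ((E^(m-j)) u) := by
    intro m
    induction m with
    | zero => simp [hw]
    | succ m ih =>
      rw [hwsucc, ih, map_add, map_sum, Finset.sum_range_succ]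
      have h1 : E ((E^m) u) = (E^(m+1)) u := by
        rw [← Module.End.mul_apply, ← pow_succ']
      have h2 : ∀ j ∈ Finset.range m, E (b j • ((E^(m-j)) u)) = b j • ((E^(m+1-j)) u) := by
        intro j hj
        rw [Finset.mem_range] at hj
        rw [map_smul, ← Module.End.mul_apply, ← pow_succ']
        congr 3
        omega
      rw [h1, Finset.sum_congr rfl h2, show m+1-m = 1 from by omega, pow_one]
      abel
  have hA : ∑ i ∈ Finset.range (n+1), q.coeff i • w i = 0 := by
    have h := congrArg (fun g : Module.End k V => g u) hETsum
    simpa [hw] using h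
  -- E^n u as a combination of lower powers
  have hBn : (E^n) u = -∑ i ∈ Finset.range n, q.coeff i • ((E^i) u) := by
    have h1 := hB
    rw [Finset.sum_range_succ, hcn, one_smul] at h1
    exact eq_neg_of_add_eq_zero_right h1
  -- the span of the first n iterates is everything
  set W' : Submodule k V := Submodule.span k (Set.range fun i : Fin n => (E^(i:ℕ)) u) with hW'
  have hmem : ∀ m : ℕ, (E^m) u ∈ W' := by
    intro m
    induction m using Nat.strong_induction_on with
    | _ m ih =>
      by_cases hm : m < n
      · exact Submodule.subset_span ⟨⟨m, hm⟩, rfl⟩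
      · push_neg at hm
        have hsplit : (E^m) u = (E^(m-n)) ((E^n) u) := by
          rw [← Module.End.mul_apply, ← pow_add, show m - n + n = m from by omega]
        rw [hsplit, hBn, map_neg, map_sum]
        refine Submodule.neg_mem _ (Submodule.sum_mem _ fun i hi => ?_)
        rw [Finset.mem_range] at hi
        rw [map_smul, ← Module.End.mul_apply, ← pow_add]
        exact Submodule.smul_mem _ _ (ih _ (by omega))
  have hEW' : ∀ v ∈ W', x v ∈ W' := by
    intro v hv
    have hmap : Submodule.map E W' ≤ W' := by
      rw [hW', Submodule.map_span, Submodule.span_le]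
      rintro _ ⟨_, ⟨i, rfl⟩, rfl⟩
      have h1 : E ((E^(i:ℕ)) u) = (E^((i:ℕ)+1)) u := by
        rw [← Module.End.mul_apply, ← pow_succ']
      rw [h1]
      exact hmem _
    exact hmap ⟨v, hv, rfl⟩
  have hW'top : ⊤ ≤ W' := by
    rcases hirr W' hEW' with h | h
    · exfalso
      apply hu
      have h0 : u ∈ W' := by simpa using hmem 0
      rw [h] at h0
      simpa using h0
    · rw [h]
  -- the basis (E^i u)_{i<n}
  have hcard : Fintype.card (Fin n) = Module.finrank k V := by simp [hn]
  set β : Basis (Fin n) k V :=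
    basisOfTopLeSpanOfCardEqFinrank (fun i : Fin n => (E^(i:ℕ)) u) hW'top hcard with hβ
  have hβi : ∀ i : Fin n, β i = (E^(i:ℕ)) u := by
    intro i
    rw [hβ, coe_basisOfTopLeSpanOfCardEqFinrank]
  have hφ : ∀ (r a : ℕ) (hr : r < n) (ha : a < n),
      β.coord ⟨r, hr⟩ ((E^a) u) = if a = r then 1 else 0 := by
    intro r a hr ha
    rw [← hβi ⟨a, ha⟩, Basis.coord_apply, Basis.repr_self, Finsupp.single_apply]
    simp [Fin.ext_iff]
  -- the key double sum identity
  have hS : ∑ i ∈ Finset.range (n+1), ∑ j ∈ Finset.range i,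
      (q.coeff i * b j) • ((E^(i-j)) u) = 0 := by
    have h1 := hA
    simp only [hC, smul_add, Finset.smul_sum, smul_smul, Finset.sum_add_distrib] at h1
    rw [hB, zero_add] at h1
    exact h1
  -- b m = 0 for all m < n
  have hbz : ∀ m, m < n → b m = 0 := by
    intro m
    induction m using Nat.strong_induction_on with
    | _ m ih =>
      intro hmn
      rcases Nat.eq_zero_or_pos m with rfl | hm1
      · exact hb0
      have hnm : n - m < n := by omega
      have h2 := congrArg (β.coord ⟨n - m, hnm⟩) hS
      rw [map_sum, map_zero] at h2
      simp only [map_sum, map_smul] at h2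
      rw [Finset.sum_eq_single_of_mem n (Finset.mem_range.mpr (by omega))] at h2
      · rw [Finset.sum_eq_single_of_mem m (Finset.mem_range.mpr hmn)] at h2
        · rw [hcn, one_mul, hφ (n-m) (n-m) hnm hnm, if_pos rfl, smul_eq_mul, mul_one] at h2
          exact h2
        · intro j hj hjm
          rw [Finset.mem_range] at hj
          by_cases hjm' : j < m
          · rw [ih j hjm' (by omega), mul_zero, zero_smul]
          · have : m < j := by omega
            rw [hφ (n-m) (n-j) hnm (by omega), if_neg (by omega), smul_zero]
      · intro i hi hin
        rw [Finset.mem_range] at hi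
        refine Finset.sum_eq_zero fun j hj => ?_
        rw [Finset.mem_range] at hj
        by_cases hjm' : j < m
        · rw [ih j hjm' (by omega), mul_zero, zero_smul]
        · rw [hφ (n-m) (i-j) hnm (by omega), if_neg (by omega), smul_zero]
  -- hence f kills the basis
  have hfE : ∀ i, i < n → f ((E^i) u) = 0 := by
    intro i hi
    have h1 : w i = (E^i) u := by
      rw [hC i, Finset.sum_eq_zero, add_zero]
      intro j hj
      rw [Finset.mem_range] at hj
      rw [hbz j (by omega), zero_smul]
    have h2 := hbz i hi
    rw [hb] at h2
    simp only at h2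
    rwa [h1] at h2
  have hf0 : f = 0 := by
    apply β.ext
    intro i
    rw [hβi i]
    simp [hfE i i.2]
  exact hf hf0
end

section
/- Let p be a prime and G a finite group admitting an automorphism α whose order is coprime to |G|, with G = [G,α]. Let M be an α-invariant normal p-subgroup of G and suppose that |I_M(α)| = p^m for a nonnegative integer m, where I_M(α) = {x⁻¹·α(x) : x ∈ M}. Then M is contained in the (2m+1)-st term Z_{2m+1}(O_p(G)) of the upper central series of O_p(G), where O_p(G) is the largest normal p-subgroup of G (the join of all normal p-subgroups of G). -/
/-!
Let `K = O_p(G)` and `Z = Z₂(K)`; both are characteristic, hence `α`-invariant. If `α` fixes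
`M ∩ Z` pointwise, then `M ∩ Z` is central in `G = [G,α]`; as a normal subgroup of the
`p`-group `K` that is not central would meet `Z₂(K)` outside `Z(K)`, this forces
`M ≤ Z(K)`. Otherwise `C_M(α)` has index at least `p` in `M ∩ C_G(α) Z`, whose image is
fixed by the automorphism induced on `G/Z`, so passing to `G/Z` divides
`|M : C_M(α)| = |I_M(α)|` by at least `p`.
By induction the image of `M` lies in `Z_{2m-1}(O_p(G/Z))`, and `O_p(G)/Z ≤ O_p(G/Z)`
pulls this back to `M ≤ Z_{2m+1}(O_p(G))`.
-/

/-- The `p`-core `O_p(G)`: the largest normal `p`-subgroup of `G`, here defined as the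
join of all normal `p`-subgroups of `G`. -/
def pCore (p : ℕ) (G : Type*) [Group G] : Subgroup G :=
  ⨆ N ∈ {N : Subgroup G | N.Normal ∧ IsPGroup p N}, N

open scoped commutatorElement

section FixedSubgroup

open Subgroup

variable {G H : Type*} [Group G] [Group H]

def MulAut.fixedSubgroup_s13 (α : MulAut G) : Subgroup G :=
  α.toMonoidHom.eqLocus (MonoidHom.id G)

@[simp]
theorem MulAut.mem_fixedSubgroup_s13 {α : MulAut G} {x : G} : x ∈ α.fixedSubgroup_s13 ↔ α x = x :=
  Iff.rfl

/-- `x ↦ x⁻¹ α(x)` identifies the right cosets of `C_M(α)` in `M` with `I_M(α)`. -/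
theorem MulAut.relIndex_fixedSubgroup_eq_card (α : MulAut G) (M : Subgroup G) :
    α.fixedSubgroup_s13.relIndex M = Nat.card {x : G | ∃ g ∈ M, x = g⁻¹ * α g} := by
  let f : M → G := fun g => (g : G)⁻¹ * α g
  have hker : QuotientGroup.rightRel (α.fixedSubgroup_s13.subgroupOf M) = Setoid.ker f := by
    ext x y
    rw [QuotientGroup.rightRel_apply, mem_subgroupOf, Setoid.ker_def, mem_fixedSubgroup_s13]
    push_cast
    rw [map_mul, map_inv, mul_inv_eq_iff_eq_mul, eq_inv_mul_iff_mul_eq, mul_assoc, eq_comm]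
  have hrange : Set.range f = {x : G | ∃ g ∈ M, x = g⁻¹ * α g} := by
    ext x
    simp [f, eq_comm]
  calc α.fixedSubgroup_s13.relIndex M
      = Nat.card (Quotient (QuotientGroup.rightRel (α.fixedSubgroup_s13.subgroupOf M))) :=
        (Nat.card_congr (QuotientGroup.quotientRightRelEquivQuotientLeftRel _)).symm
    _ = Nat.card (Set.range f) := by
        rw [hker]
        exact Nat.card_congr (Setoid.quotientKerEquivRange f)
    _ = _ := by rw [hrange]

theorem MulAut.fixedSubgroup_le_comap {α : MulAut G} {β : MulAut H} {f : G →* H}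
    (hf : ∀ g, f (α g) = β (f g)) : α.fixedSubgroup_s13 ≤ β.fixedSubgroup_s13.comap f :=
  fun g hg => (hf g).symm.trans (congrArg f hg)

theorem closure_inv_mul_apply_eq_top_of_surjective {α : MulAut G} {β : MulAut H} {f : G →* H}
    (hsurj : Function.Surjective f) (hf : ∀ g, f (α g) = β (f g))
    (hGα : closure {x : G | ∃ g : G, x = g⁻¹ * α g} = ⊤) :
    closure {x : H | ∃ h : H, x = h⁻¹ * β h} = ⊤ := by
  rw [eq_top_iff, ← map_top_of_surjective f hsurj, ← hGα, MonoidHom.map_closure]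
  refine closure_mono ?_
  rintro _ ⟨_, ⟨g, rfl⟩, rfl⟩
  exact ⟨f g, by rw [map_mul, map_inv, hf]⟩

theorem le_center_of_le_fixedSubgroup {α : MulAut G}
    (hGα : closure {x : G | ∃ g : G, x = g⁻¹ * α g} = ⊤) {N : Subgroup G} [hN : N.Normal]
    (hfix : N ≤ α.fixedSubgroup_s13) : N ≤ center G := by
  suffices centralizer (N : Set G) = ⊤ from centralizer_eq_top_iff_subset.mp this
  rw [eq_top_iff, ← hGα, closure_le]
  rintro _ ⟨g, rfl⟩ n hn
  -- `α` fixes both `n` and `g n g⁻¹`, so `g` and `α g` conjugate `n` alike.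
  have hconj : α g * n * (α g)⁻¹ = g * n * g⁻¹ := by
    have hn' : α n = n := hfix hn
    rw [← hn', ← map_inv, ← map_mul, ← map_mul, hn']
    exact hfix (hN.conj_mem n hn g)
  calc n * (g⁻¹ * α g) = g⁻¹ * (g * n * g⁻¹) * α g := by group
    _ = g⁻¹ * (α g * n * (α g)⁻¹) * α g := by rw [hconj]
    _ = g⁻¹ * α g * n := by group

end FixedSubgroup

theorem dvd_pow_of_mul_dvd_pow_succ {p r s m : ℕ} (hp : p.Prime)
    (h : r * s ∣ p ^ (m + 1)) (hr : r ≠ 1) : s ∣ p ^ m := by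
  obtain ⟨i, -, rfl⟩ := (Nat.dvd_prime_pow hp).mp (dvd_of_mul_right_dvd h)
  obtain ⟨j, rfl⟩ : ∃ j, i = j + 1 :=
    Nat.exists_eq_succ_of_ne_zero (by rintro rfl; exact hr (pow_zero p))
  rw [pow_succ', pow_succ', mul_assoc] at h
  exact dvd_of_mul_left_dvd (Nat.dvd_of_mul_dvd_mul_left hp.pos h)

section PCore

open Subgroup

variable {p : ℕ} {G H : Type*} [Group G] [Group H]

theorem le_pCore {N : Subgroup G} (hN : N.Normal) (hNp : IsPGroup p N) : N ≤ pCore p G :=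
  le_iSup₂ (f := fun N _ => N) N ⟨hN, hNp⟩

instance pCore_characteristic : (pCore p G).Characteristic :=
  characteristic_iff_le_comap.mpr fun φ => iSup₂_le fun _ ⟨hN, hNp⟩ =>
    map_le_iff_le_comap.mp (le_pCore (hN.map _ φ.surjective) (hNp.map _))

theorem isPGroup_pCore [Finite G] : IsPGroup p (pCore p G) := by
  have hsup : SupClosed {N : Subgroup G | N.Normal ∧ IsPGroup p N} := by
    rintro N ⟨hN, hNp⟩ L ⟨hL, hLp⟩
    exact ⟨sup_normal N L, hNp.to_sup_of_normal_right hLp⟩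
  rw [pCore, ← sSup_eq_iSup]
  exact (hsup.sSup_mem (Set.toFinite _) ⟨inferInstance, IsPGroup.of_bot⟩ le_rfl).2

theorem map_pCore_le_pCore [Finite G] {f : G →* H} (hf : Function.Surjective f) :
    (pCore p G).map f ≤ pCore p H :=
  le_pCore (Normal.map inferInstance f hf) (isPGroup_pCore.map f)

end PCore

namespace Subgroup

theorem relIndex_sup_dvd_pow_of_not_inf_le {G : Type*} [Group G] {p m : ℕ} (hp : p.Prime)
    {F N M : Subgroup G} (hFM : F.relIndex M ∣ p ^ (m + 1)) (hMN : ¬ M ⊓ N ≤ F) :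
    (F ⊔ N).relIndex M ∣ p ^ m := by
  have hmul : F.relIndex ((F ⊔ N) ⊓ M) * (F ⊔ N).relIndex M = F.relIndex M := by
    rw [relIndex_inf_mul_relIndex, inf_of_le_left le_sup_left]
  refine dvd_pow_of_mul_dvd_pow_succ hp (hmul ▸ hFM) fun h => hMN ?_
  exact (le_inf (inf_le_right.trans le_sup_right) inf_le_left).trans (relIndex_eq_one.mp h)

section PGroup

variable {p : ℕ} [Fact p.Prime] {P : Type*} [Group P] [Finite P]

theorem _root_.IsPGroup.inf_center_ne_bot (hP : IsPGroup p P) {N : Subgroup P} [N.Normal]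
    (hN : N ≠ ⊥) : N ⊓ center P ≠ ⊥ := by
  obtain ⟨k, hk, hcard⟩ :=
    (hP.to_subgroup N).nontrivial_iff_card.mp ((nontrivial_iff_ne_bot N).mpr hN)
  obtain ⟨b, hb, hb1⟩ :=
    (hP.of_equiv ConjAct.toConjAct).exists_fixed_point_of_prime_dvd_card_of_fixed_point N
      (hcard ▸ dvd_pow_self p hk.ne') (a := 1) smul_one
  have hbZ : (b : P) ∈ center P := mem_center_iff.mpr fun g => by
    have := congrArg Subtype.val (hb (ConjAct.toConjAct g))
    rw [ConjAct.Subgroup.val_conj_smul, ConjAct.toConjAct_smul] at this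
    exact mul_inv_eq_iff_eq_mul.mp this
  rw [ne_bot_iff_exists_ne_one]
  exact ⟨⟨b, b.2, hbZ⟩, fun h => hb1 (Subtype.ext (congrArg Subtype.val h).symm)⟩

theorem _root_.IsPGroup.le_center_of_inf_upperCentralSeries_two_le (hP : IsPGroup p P)
    {N : Subgroup P} [hN : N.Normal] (hN2 : N ⊓ upperCentralSeries P 2 ≤ center P) :
    N ≤ center P := by
  let π := QuotientGroup.mk' (center P)
  have hcomap : (center (P ⧸ center P)).comap π = upperCentralSeries P 2 := by
    have h := comap_upperCentralSeries_quotient_center (G := P) 1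
    rwa [upperCentralSeries_one] at h
  have : (N.map π).Normal := hN.map π (QuotientGroup.mk'_surjective _)
  have hinf : N.map π ⊓ center (P ⧸ center P) = ⊥ := by
    rw [eq_bot_iff]
    rintro _ ⟨⟨x, hxN, rfl⟩, hxZ⟩
    rw [mem_bot, QuotientGroup.mk'_apply, QuotientGroup.eq_one_iff]
    exact hN2 ⟨hxN, hcomap ▸ hxZ⟩
  rw [← QuotientGroup.ker_mk' (center P), ← map_eq_bot_iff]
  by_contra hne
  exact (hP.to_quotient _).inf_center_ne_bot hne hinf

end PGroup

section UpperCentralSeries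

variable {G H : Type*} [Group G] [Group H]

theorem mem_map_subtype_upperCentralSeries_succ_iff {K : Subgroup G} {n : ℕ} {x : G} :
    x ∈ (upperCentralSeries K (n + 1)).map K.subtype ↔
      x ∈ K ∧ ∀ y ∈ K, ⁅x, y⁆ ∈ (upperCentralSeries K n).map K.subtype := by
  constructor
  · rintro ⟨x, hx, rfl⟩
    exact ⟨x.2, fun y hy => ⟨_, mem_upperCentralSeries_succ_iff.mp hx ⟨y, hy⟩, rfl⟩⟩
  · rintro ⟨hx, h⟩
    refine ⟨⟨x, hx⟩, mem_upperCentralSeries_succ_iff.mpr fun y => ?_, rfl⟩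
    obtain ⟨z, hz, hzx⟩ := h y y.2
    have : z = ⁅(⟨x, hx⟩ : K), y⁆ := Subtype.ext hzx
    rwa [← this]

theorem mem_map_subtype_upperCentralSeries_add_of_map {f : G →* H} {K : Subgroup G}
    {L : Subgroup H} (hKL : K.map f ≤ L) {k : ℕ}
    (hker : f.ker ≤ (upperCentralSeries K k).map K.subtype) :
    ∀ {n : ℕ} {x : G}, x ∈ K → f x ∈ (upperCentralSeries L n).map L.subtype →
      x ∈ (upperCentralSeries K (n + k)).map K.subtype
  | 0, x, _, hfx => by
    rw [zero_add]
    refine hker (f.mem_ker.mpr ?_)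
    simpa [upperCentralSeries_zero] using hfx
  | n + 1, x, hx, hfx => by
    rw [Nat.add_right_comm, mem_map_subtype_upperCentralSeries_succ_iff]
    refine ⟨hx, fun y hy => mem_map_subtype_upperCentralSeries_add_of_map hKL hker
      (K.mul_mem (K.mul_mem (K.mul_mem hx hy) (K.inv_mem hx)) (K.inv_mem hy)) ?_⟩
    rw [map_commutatorElement]
    exact (mem_map_subtype_upperCentralSeries_succ_iff.mp hfx).2 _ (hKL (mem_map_of_mem f hy))

end UpperCentralSeries

section Descent

variable {p : ℕ} [Fact p.Prime] {G : Type*} [Group G] [Finite G]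

theorem le_map_subtype_center_of_inf_le_fixedSubgroup {α : MulAut G}
    (hGα : closure {x : G | ∃ g : G, x = g⁻¹ * α g} = ⊤) {K M : Subgroup G} [K.Normal]
    (hK : IsPGroup p K) [M.Normal] (hMK : M ≤ K)
    (hfix : M ⊓ (upperCentralSeries K 2).map K.subtype ≤ α.fixedSubgroup_s13) :
    M ≤ (center K).map K.subtype := by
  have hcent := le_center_of_le_fixedSubgroup hGα hfix
  have hMZ : M.subgroupOf K ≤ center K :=
    hK.le_center_of_inf_upperCentralSeries_two_le fun x ⟨hxM, hx2⟩ =>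
      mem_center_iff.mpr fun y => Subtype.ext (mem_center_iff.mp (hcent ⟨hxM, x, hx2, rfl⟩) y)
  calc M = (M.subgroupOf K).map K.subtype := by rw [subgroupOf_map_subtype, inf_of_le_left hMK]
    _ ≤ _ := map_mono hMZ

theorem le_map_subtype_upperCentralSeries_pCore_of_inf_le_fixedSubgroup {α : MulAut G}
    (hGα : closure {x : G | ∃ g : G, x = g⁻¹ * α g} = ⊤) {M : Subgroup G} [M.Normal]
    (hMp : IsPGroup p M)
    (hfix : M ⊓ (upperCentralSeries (pCore p G) 2).map (pCore p G).subtype ≤ α.fixedSubgroup_s13)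
    (n : ℕ) : M ≤ (upperCentralSeries (pCore p G) (n + 1)).map (pCore p G).subtype := by
  refine (le_map_subtype_center_of_inf_le_fixedSubgroup hGα isPGroup_pCore
    (le_pCore inferInstance hMp) hfix).trans (map_mono ?_)
  rw [← upperCentralSeries_one]
  exact upperCentralSeries_mono _ (Nat.le_add_left 1 n)

theorem le_map_subtype_upperCentralSeries_pCore (m : ℕ) {α : MulAut G}
    (hGα : closure {x : G | ∃ g : G, x = g⁻¹ * α g} = ⊤) {M : Subgroup G} [hMn : M.Normal]
    (hMp : IsPGroup p M) (hMα : M.map α.toMonoidHom = M)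
    (hrel : α.fixedSubgroup_s13.relIndex M ∣ p ^ m) :
    M ≤ (upperCentralSeries (pCore p G) (2 * m + 1)).map (pCore p G).subtype := by
  induction m generalizing G with
  | zero =>
    have hMfix : M ≤ α.fixedSubgroup_s13 := relIndex_eq_one.mp (Nat.dvd_one.mp hrel)
    exact le_map_subtype_upperCentralSeries_pCore_of_inf_le_fixedSubgroup hGα hMp
      (inf_le_left.trans hMfix) _
  | succ m ih =>
    set K := pCore p G
    set N := (upperCentralSeries K 2).map K.subtype
    by_cases hfix : M ⊓ N ≤ α.fixedSubgroup_s13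
    · exact le_map_subtype_upperCentralSeries_pCore_of_inf_le_fixedSubgroup hGα hMp hfix _
    have hNα : N.map α.toMonoidHom = N := characteristic_iff_map_eq.mp inferInstance α
    let π := QuotientGroup.mk' N
    have hπ : Function.Surjective π := QuotientGroup.mk'_surjective N
    let β : MulAut (G ⧸ N) := QuotientGroup.congr N N α hNα
    have hπβ : ∀ g, π (α g) = β (π g) := fun g => (QuotientGroup.congr_mk _ _ _ hNα g).symm
    have hMβ : (M.map π).map β.toMonoidHom = M.map π := by
      rw [map_map, show β.toMonoidHom.comp π = π.comp α.toMonoidHom from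
        MonoidHom.ext fun g => (hπβ g).symm, ← map_map, hMα]
    have hrelβ : β.fixedSubgroup_s13.relIndex (M.map π) ∣ p ^ m := by
      rw [← relIndex_comap]
      have hle : α.fixedSubgroup_s13 ⊔ N ≤ β.fixedSubgroup_s13.comap π :=
        sup_le (MulAut.fixedSubgroup_le_comap hπβ)
          ((QuotientGroup.ker_mk' N).ge.trans (MonoidHom.ker_le_comap π _))
      exact (relIndex_dvd_of_le_left M hle).trans
        (relIndex_sup_dvd_pow_of_not_inf_le Fact.out hrel hfix)
    have : (M.map π).Normal := hMn.map π hπ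
    have hMπ :=
      ih (closure_inv_mul_apply_eq_top_of_surjective hπ hπβ hGα) (hMp.map π) hMβ hrelβ
    intro x hx
    have hx' := mem_map_subtype_upperCentralSeries_add_of_map (map_pCore_le_pCore hπ)
      (QuotientGroup.ker_mk' N).le (le_pCore hMn hMp hx) (hMπ (mem_map_of_mem π hx))
    rwa [show 2 * m + 1 + 2 = 2 * (m + 1) + 1 by ring] at hx'

end Descent

end Subgroup

theorem subgroup_in_upper_central_series_of_pcore_general
    (p : ℕ) (hp : p.Prime) (G : Type*) [Group G] [Finite G] (α : MulAut G)
    (hGα : Subgroup.closure {x : G | ∃ g : G, x = g⁻¹ * α g} = ⊤)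
    (M : Subgroup G) (hMn : M.Normal) (hMp : IsPGroup p M)
    (hMinv : Subgroup.map α.toMonoidHom M = M)
    (m : ℕ) (hIM : Nat.card {x : G | ∃ g ∈ M, x = g⁻¹ * α g} = p ^ m) :
    M ≤ Subgroup.map (pCore p G).subtype (upperCentralSeries (pCore p G) (2 * m + 1)) := by
  have : Fact p.Prime := ⟨hp⟩
  exact Subgroup.le_map_subtype_upperCentralSeries_pCore m hGα hMp hMinv
    (by rw [MulAut.relIndex_fixedSubgroup_eq_card, hIM])

/-- Lemma 4.1: Let `p` be a prime and `G` a finite group with a coprime automorphism `α`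
such that `G = [G,α]`. If `M` is an `α`-invariant normal `p`-subgroup of `G` with
`|I_M(α)| = p^m`, then `M ≤ Z_{2m+1}(O_p(G))`. -/
theorem subgroup_in_upper_central_series_of_pcore
    (p : ℕ) (hp : p.Prime) (G : Type*) [Group G] [Finite G] (α : MulAut G)
    (hcop : Nat.Coprime (orderOf α) (Nat.card G))
    (hGα : Subgroup.closure {x : G | ∃ g : G, x = g⁻¹ * α g} = ⊤)
    (M : Subgroup G) (hMn : M.Normal) (hMp : IsPGroup p M)
    (hMinv : Subgroup.map α.toMonoidHom M = M)
    (m : ℕ) (hIM : Nat.card {x : G | ∃ g ∈ M, x = g⁻¹ * α g} = p ^ m) :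
    M ≤ Subgroup.map (pCore p G).subtype (upperCentralSeries (pCore p G) (2 * m + 1)) :=
  subgroup_in_upper_central_series_of_pcore_general p hp G α hGα M hMn hMp hMinv m hIM
end
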